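/- arXiv:2405.17491 — 6 statements merged into one kernel-verified Lean document; each statement's English description precedes it below -/
import Mathlib

section
/- Let M ≥ 1, c > 0, 0 < δ < 1, and let χ: ℝ → ℝ satisfy χ(t) = ct for every t ≥ −δ, and suppose that the restriction of χ to (−∞,0] belongs to W_M^+ (so χ is concave and increasing on ℝ). For 0 < ε < δ²/8 define χ̄_ε(t) := χ_ε(t + ε) − cε, where χ_ε := χ * g_ε. Then the restriction of χ̄_ε to (−∞,0] belongs to W_{M/(1−δ)²}^+, one has χ̄_ε(t) ≥ χ(t) − cε for every t ∈ ℝ, and χ̄_ε converges to χ uniformly on compact subsets of ℝ as ε → 0⁺. -/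
set_option maxHeartbeats 1000000

open MeasureTheory Filter Set

noncomputable section

lemma concave_tangent_le {f : ℝ → ℝ} (hf : ConcaveOn ℝ Set.univ f) {p d : ℝ}
    (hd : HasDerivAt f d p) (x : ℝ) : f x ≤ f p + d * (x - p) := by
  have h1 : HasDerivAt (fun l : ℝ => p + l * (x - p)) (x - p) 0 := by
    simpa using ((hasDerivAt_id (0 : ℝ)).mul_const (x - p)).const_add p
  have hd' : HasDerivAt f d ((fun l : ℝ => p + l * (x - p)) 0) := by simpa using hd
  have hcomp : HasDerivAt (fun l : ℝ => f (p + l * (x - p))) (d * (x - p)) 0 := by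
    exact hd'.comp (0 : ℝ) h1
  set F := fun l : ℝ => f (p + l * (x - p)) with hF
  have hslope : Tendsto (slope F 0) (nhdsWithin 0 (Set.Ioi 0)) (nhds (d * (x - p))) :=
    (hasDerivAt_iff_tendsto_slope.1 hcomp).mono_left
      (nhdsWithin_mono 0 (fun y hy => ne_of_gt hy))
  have hev : ∀ᶠ l in nhdsWithin (0:ℝ) (Set.Ioi 0), f x - f p ≤ slope F 0 l := by
    filter_upwards [Ioo_mem_nhdsGT (show (0:ℝ) < 1 by norm_num)] with l hl
    have hcomb := hf.2 (mem_univ p) (mem_univ x) (by linarith [hl.2] : (0:ℝ) ≤ 1 - l)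
      (le_of_lt hl.1) (by ring)
    have harg : (1 - l) • p + l • x = p + l * (x - p) := by
      simp only [smul_eq_mul]; ring
    rw [harg] at hcomb
    have hF0 : F 0 = f p := by simp [hF]
    have hFl : f p + l * (f x - f p) ≤ F l := by
      have : (1 - l) • f p + l • f x = f p + l * (f x - f p) := by
        simp only [smul_eq_mul]; ring
      rw [this] at hcomb; exact hcomb
    have : slope F 0 l = (F l - F 0) / l := by
      simp [slope_def_field]
    rw [this, hF0, le_div_iff₀ hl.1]
    linarith
  have := ge_of_tendsto hslope hev
  linarith

lemma chi_le_linear {M c δ : ℝ} {χ : ℝ → ℝ} (hc : 0 < c) (hδ0 : 0 < δ)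
    (hχlin : ∀ t : ℝ, -δ ≤ t → χ t = c * t)
    (hconc : ConcaveOn ℝ (Set.Iic 0) χ) (hzero : χ 0 = 0) :
    ∀ x : ℝ, χ x ≤ c * x := by
  intro x
  rcases le_or_gt (-δ) x with hx | hx
  · exact (hχlin x hx).le
  · have hx0 : x < 0 := by linarith
    set a := δ / (-x) with ha
    have ha0 : 0 < a := div_pos hδ0 (by linarith)
    have ha1 : a ≤ 1 := by
      rw [div_le_one (by linarith : (0:ℝ) < -x)]; linarith
    have hcomb := hconc.2 (mem_Iic.2 hx0.le) (mem_Iic.2 le_rfl) ha0.le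
      (by linarith : (0:ℝ) ≤ 1 - a) (by ring)
    have hxne : (-x) ≠ 0 := ne_of_gt (by linarith)
    have harg : a • x + (1 - a) • (0:ℝ) = -δ := by
      simp only [smul_eq_mul, mul_zero, add_zero, ha]
      rw [div_mul_eq_mul_div, div_eq_iff hxne]; ring
    rw [harg] at hcomb
    have hδval : χ (-δ) = c * (-δ) := hχlin _ le_rfl
    have : a * χ x ≤ -(c * δ) := by
      simp only [smul_eq_mul, hzero, mul_zero, add_zero, hδval] at hcomb
      linarith
    have h2 : χ x ≤ (-(c * δ)) / a := (le_div_iff₀' ha0).2 this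
    have : (-(c * δ)) / a = c * x := by
      rw [ha]; field_simp
    linarith

lemma chi_monotone {M c δ : ℝ} {χ : ℝ → ℝ} (hc : 0 < c) (hδ0 : 0 < δ)
    (hχlin : ∀ t : ℝ, -δ ≤ t → χ t = c * t)
    (hsmono : StrictMonoOn χ (Set.Iic 0)) (hzero : χ 0 = 0) :
    Monotone χ := by
  intro x y hxy
  rcases le_or_gt y 0 with hy | hy
  · rcases eq_or_lt_of_le hxy with rfl | h
    · exact le_rfl
    · exact (hsmono (mem_Iic.2 (h.le.trans hy)) (mem_Iic.2 hy) h).le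
  · rcases le_or_gt x 0 with hx | hx
    · have h1 : χ x ≤ χ 0 := by
        rcases eq_or_lt_of_le hx with rfl | h
        · exact le_rfl
        · exact (hsmono (mem_Iic.2 hx) (mem_Iic.2 le_rfl) h).le
      have h2 : χ y = c * y := hχlin y (by linarith)
      nlinarith
    · rw [hχlin x (by linarith), hχlin y (by linarith)]
      nlinarith

lemma chi_concave_univ {M c δ : ℝ} {χ : ℝ → ℝ} (hc : 0 < c) (hδ0 : 0 < δ)
    (hχlin : ∀ t : ℝ, -δ ≤ t → χ t = c * t)
    (hconc : ConcaveOn ℝ (Set.Iic 0) χ) (hzero : χ 0 = 0) :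
    ConcaveOn ℝ Set.univ χ := by
  have hle := chi_le_linear (M := M) hc hδ0 hχlin hconc hzero
  have key : ∀ x y a b : ℝ, x ≤ y → 0 < a → 0 < b → a + b = 1 →
      a * χ x + b * χ y ≤ χ (a * x + b * y) := by
    intro x y a b hxy ha hb hab
    obtain ⟨z, hz⟩ : ∃ z : ℝ, z = a * x + b * y := ⟨_, rfl⟩
    rw [← hz]
    have hx1 : a * x + b * x = x := by rw [← add_mul, hab, one_mul]
    have hy1 : a * y + b * y = y := by rw [← add_mul, hab, one_mul]
    have hbyx : 0 ≤ b * (y - x) := mul_nonneg hb.le (sub_nonneg.2 hxy)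
    have hayx : 0 ≤ a * (y - x) := mul_nonneg ha.le (sub_nonneg.2 hxy)
    have hxz : x ≤ z := by rw [hz]; nlinarith [hbyx, hx1]
    have hzy : z ≤ y := by rw [hz]; nlinarith [hayx, hy1]
    rcases le_or_gt y 0 with hy | hy
    · have := hconc.2 (mem_Iic.2 (hxy.trans hy)) (mem_Iic.2 hy) ha.le hb.le hab
      rw [hz]
      simpa [smul_eq_mul] using this
    · rcases le_or_gt (-δ) x with hx | hx
      · rw [hχlin x hx, hχlin y (by linarith), hχlin z (by linarith)]
        rw [hz]; ring_nf
        exact le_rfl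
      · rcases le_or_gt (-δ) z with hzδ | hzδ
        · rw [hχlin z hzδ, hχlin y (by linarith), hz]
          have h1 : χ x ≤ c * x := hle x
          nlinarith [mul_le_mul_of_nonneg_left h1 ha.le]
        · -- z < -δ, x < -δ ≤ 0 < y
          have hz0 : z < 0 := by linarith
          have hx0 : x < 0 := by linarith
          obtain ⟨t, ht⟩ : ∃ t : ℝ, t = z / x := ⟨_, rfl⟩
          have hxne : x ≠ 0 := ne_of_lt hx0
          have htx : t * x = z := by rw [ht]; exact div_mul_cancel₀ z hxne
          have ht0 : 0 < t := by rw [ht]; exact div_pos_of_neg_of_neg hz0 hx0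
          have ht1 : t ≤ 1 := by
            rw [ht, div_le_one_of_neg hx0]; exact hxz
          have hcomb := hconc.2 (mem_Iic.2 hx0.le) (mem_Iic.2 le_rfl) ht0.le
            (by linarith : (0:ℝ) ≤ 1 - t) (by ring)
          have harg : t • x + (1 - t) • (0:ℝ) = z := by
            simp only [smul_eq_mul, mul_zero, add_zero]; exact htx
          rw [harg] at hcomb
          have hχz : t * χ x ≤ χ z := by
            simpa [smul_eq_mul, hzero] using hcomb
          have hta : (t - a) * x = b * y := by
            have h' : (t - a) * x = t * x - a * x := by ring
            rw [h', htx, hz]; ring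
          have htanp : t - a ≤ 0 := by
            by_contra hcon
            push_neg at hcon
            have h1 : (t - a) * x < 0 := mul_neg_of_pos_of_neg (by linarith) hx0
            have h2 : 0 < b * y := mul_pos hb hy
            rw [hta] at h1; linarith
          have hkey : (t - a) * (c * x) ≤ (t - a) * χ x :=
            mul_le_mul_of_nonpos_left (hle x) htanp
          have hχy : χ y = c * y := hχlin y (by linarith)
          have h5 : (t - a) * (c * x) = b * χ y := by
            rw [hχy]; linear_combination c * hta
          have h6 : t * χ x = a * χ x + (t - a) * χ x := by ring
          linarith
  refine ⟨convex_univ, ?_⟩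
  intro x _ y _ a b ha hb hab
  rcases eq_or_lt_of_le ha with rfl | ha'
  · simp only [zero_smul, zero_add, smul_eq_mul]
    have : b = 1 := by linarith
    simp [this]
  rcases eq_or_lt_of_le hb with rfl | hb'
  · simp only [zero_smul, add_zero, smul_eq_mul]
    have : a = 1 := by linarith
    simp [this]
  simp only [smul_eq_mul]
  rcases le_total x y with h | h
  · exact key x y a b h ha' hb' hab
  · have := key y x b a h hb' ha' (by linarith)
    calc a * χ x + b * χ y = b * χ y + a * χ x := by ring
    _ ≤ χ (b * y + a * x) := this
    _ = χ (a * x + b * y) := by rw [add_comm]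

lemma chi_star {M : ℝ} {χ : ℝ → ℝ}
    (hmono : Monotone χ) (hconcU : ConcaveOn ℝ Set.univ χ) (hcont : Continuous χ)
    (hzero : χ 0 = 0)
    (hderiv : ∀ t < (0:ℝ), ∀ d : ℝ, HasDerivAt χ d t → |t * d| ≤ M * |χ t|) :
    ∀ a : ℝ, a < 0 → ∀ b : ℝ, a < b → χ b - χ a ≤ M * (-χ a) / (-a) * (b - a) := by
  have hdiffae : ∀ᵐ x : ℝ, DifferentiableAt ℝ χ x := hmono.ae_differentiableAt
  have hexists : ∀ u v : ℝ, u < v → ∃ τ, τ ∈ Ioo u v ∧ DifferentiableAt ℝ χ τ := by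
    intro u v huv
    by_contra hcon
    push_neg at hcon
    have hsub : Ioo u v ⊆ {x | ¬ DifferentiableAt ℝ χ x} := fun x hx => hcon x hx
    have h0 : volume (Ioo u v) = 0 := measure_mono_null hsub (ae_iff.1 hdiffae)
    rw [Real.volume_Ioo, ENNReal.ofReal_eq_zero] at h0
    linarith
  intro a ha b hab
  have hseq : ∀ n : ℕ, ∃ τ, τ ∈ Ioo (a - 1/((n:ℝ)+1)) a ∧ DifferentiableAt ℝ χ τ := by
    intro n
    refine hexists _ _ ?_
    have : (0:ℝ) < 1/((n:ℝ)+1) := by positivity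
    linarith
  choose τ hτ using hseq
  have htend : Tendsto τ atTop (nhds a) := by
    have hlow : Tendsto (fun n : ℕ => a - 1/((n:ℝ)+1)) atTop (nhds a) := by
      have := tendsto_one_div_add_atTop_nhds_zero_nat (𝕜 := ℝ)
      simpa using tendsto_const_nhds.sub this
    exact tendsto_of_tendsto_of_tendsto_of_le_of_le hlow tendsto_const_nhds
      (fun n => (hτ n).1.1.le) (fun n => (hτ n).1.2.le)
  have key : ∀ n : ℕ, χ b - χ a ≤ M * (-χ (τ n)) / (-(τ n)) * (b - τ n) := by
    intro n
    obtain ⟨hmem, hdiff⟩ := hτ n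
    have hτa : τ n < a := hmem.2
    have hτ0 : τ n < 0 := hτa.trans ha
    have hd := hdiff.hasDerivAt
    have habs := hderiv (τ n) hτ0 _ hd
    have hχτ : χ (τ n) ≤ 0 := by
      have := hmono hτ0.le
      rwa [hzero] at this
    have habs2 : -(τ n * deriv χ (τ n)) ≤ M * (-χ (τ n)) := by
      calc -(τ n * deriv χ (τ n)) ≤ |τ n * deriv χ (τ n)| := neg_le_abs _
      _ ≤ M * |χ (τ n)| := habs
      _ = M * (-χ (τ n)) := by rw [abs_of_nonpos hχτ]
    have hdle : deriv χ (τ n) ≤ M * (-χ (τ n)) / (-(τ n)) := by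
      rw [le_div_iff₀ (by linarith : (0:ℝ) < -(τ n))]
      nlinarith [habs2]
    have htan := concave_tangent_le hconcU hd b
    have hmono2 : χ (τ n) ≤ χ a := hmono hτa.le
    have hbτ : (0:ℝ) ≤ b - τ n := by linarith
    have hd0 : deriv χ (τ n) * (b - τ n) ≤ M * (-χ (τ n)) / (-(τ n)) * (b - τ n) :=
      mul_le_mul_of_nonneg_right hdle hbτ
    linarith
  have hlim : Tendsto (fun n => M * (-χ (τ n)) / (-(τ n)) * (b - τ n)) atTop
      (nhds (M * (-χ a) / (-a) * (b - a))) := by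
    have h1 : Tendsto (fun n => χ (τ n)) atTop (nhds (χ a)) :=
      (hcont.tendsto a).comp htend
    have h2 : Tendsto (fun n => M * (-χ (τ n))) atTop (nhds (M * (-χ a))) :=
      tendsto_const_nhds.mul h1.neg
    have h3 : Tendsto (fun n => M * (-χ (τ n)) / (-(τ n))) atTop
        (nhds (M * (-χ a) / (-a))) :=
      h2.div htend.neg (by intro h; rw [neg_eq_zero] at h; linarith)
    exact h3.mul (tendsto_const_nhds.sub htend)
  exact ge_of_tendsto hlim (Eventually.of_forall key)

/-- The class `W_M^+` of concave, increasing weights `χ : (-∞,0] → (-∞,0]` with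
`χ(0) = 0`, `χ < 0` on `(-∞,0)`, and `|t·χ'(t)| ≤ M·|χ(t)|` at every point `t < 0`
where `χ` is differentiable (formalized for functions on `ℝ`, with all conditions
imposed on `(-∞,0]`). -/
def WMPlus (M : ℝ) (χ : ℝ → ℝ) : Prop :=
  ConcaveOn ℝ (Set.Iic 0) χ ∧ StrictMonoOn χ (Set.Iic 0) ∧ (∀ t ≤ (0:ℝ), χ t ≤ 0) ∧
    χ 0 = 0 ∧ (∀ t < (0:ℝ), χ t < 0) ∧
    ∀ t < (0:ℝ), ∀ d : ℝ, HasDerivAt χ d t → |t * d| ≤ M * |χ t|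

/-- The mollification `χ_ε = χ * g_ε`, where `g_ε(s) = ε⁻¹ g(s/ε)`. -/
def chiEps (χ g : ℝ → ℝ) (ε : ℝ) : ℝ → ℝ :=
  fun t => ∫ s : ℝ, χ (t - s) * (ε⁻¹ * g (s / ε))

/-- The shifted mollification `χ̄_ε(t) = χ_ε(t + ε) - c ε`. -/
def chiBar (χ g : ℝ → ℝ) (c ε : ℝ) : ℝ → ℝ :=
  fun t => chiEps χ g ε (t + ε) - c * ε

theorem stmt2 (M c δ : ℝ) (hM : 1 ≤ M) (hc : 0 < c) (hδ0 : 0 < δ) (hδ1 : δ < 1)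
    (χ g : ℝ → ℝ)
    (hχlin : ∀ t : ℝ, -δ ≤ t → χ t = c * t)
    (hχ : WMPlus M χ)
    (hg_smooth : ContDiff ℝ (⊤ : ℕ∞) g)
    (hg_even : ∀ t, g (-t) = g t)
    (hg_nonneg : ∀ t, 0 ≤ g t)
    (hg_le_one : ∀ t, g t ≤ 1)
    (hg_supp : Function.support g ⊆ Set.Icc (-1) 1)
    (hg_int : ∫ t : ℝ, g t = 1) :
    (∀ ε : ℝ, 0 < ε → ε < δ ^ 2 / 8 →
      WMPlus (M / (1 - δ) ^ 2) (chiBar χ g c ε)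
      ∧ (∀ t : ℝ, χ t - c * ε ≤ chiBar χ g c ε t))
    ∧ (∀ K : Set ℝ, IsCompact K →
        TendstoUniformlyOn (fun ε : ℝ => chiBar χ g c ε) χ
          (nhdsWithin 0 (Set.Ioi 0)) K) := by
  obtain ⟨hconcIic, hsmono, hnonpos, hzero, hnegIio, hderivχ⟩ := hχ
  have hle := chi_le_linear (M := M) hc hδ0 hχlin hconcIic hzero
  have hmono := chi_monotone (M := M) hc hδ0 hχlin hsmono hzero
  have hconcU := chi_concave_univ (M := M) hc hδ0 hχlin hconcIic hzero
  have hcont : Continuous χ := continuousOn_univ.1 (hconcU.continuousOn isOpen_univ)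
  have hgcont : Continuous g := hg_smooth.continuous
  have hstar := chi_star hmono hconcU hcont hzero hderivχ
  -- basic facts about the mollifier
  have hg_zero : ∀ x : ℝ, x ∉ Set.Icc (-1:ℝ) 1 → g x = 0 := by
    intro x hx
    by_contra h
    exact hx (hg_supp h)
  have hw_nn : ∀ ε : ℝ, 0 < ε → ∀ s : ℝ, 0 ≤ ε⁻¹ * g (s / ε) :=
    fun ε hε s => mul_nonneg (inv_nonneg.2 hε.le) (hg_nonneg _)
  have hw_zero : ∀ ε : ℝ, 0 < ε → ∀ s : ℝ, ε < |s| → ε⁻¹ * g (s / ε) = 0 := by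
    intro ε hε s hs
    have hmem : s / ε ∉ Set.Icc (-1:ℝ) 1 := by
      rw [mem_Icc]
      rintro ⟨h1, h2⟩
      have h3 : |s / ε| ≤ 1 := abs_le.2 ⟨h1, h2⟩
      rw [abs_div, abs_of_pos hε, div_le_one hε] at h3
      linarith
    rw [hg_zero _ hmem, mul_zero]
  have habs_le : ∀ ε : ℝ, 0 < ε → ∀ s : ℝ, ε⁻¹ * g (s / ε) ≠ 0 → -ε ≤ s ∧ s ≤ ε := by
    intro ε hε s hs
    by_contra hcon
    rw [not_and_or] at hcon
    push_neg at hcon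
    have : ε < |s| := by
      rcases hcon with h | h
      · rw [abs_of_neg (by linarith)]; linarith
      · rw [abs_of_pos (by linarith)]; linarith
    exact hs (hw_zero ε hε s this)
  have hint : ∀ ε : ℝ, 0 < ε → ∀ φ : ℝ → ℝ, Continuous φ →
      Integrable (fun s => φ s * (ε⁻¹ * g (s / ε))) := by
    intro ε hε φ hφ
    apply Continuous.integrable_of_hasCompactSupport
    · exact hφ.mul (continuous_const.mul (hgcont.comp (continuous_id.div_const ε)))
    · apply HasCompactSupport.intro (isCompact_Icc (a := -ε) (b := ε))
      intro s hs
      simp only [mem_Icc, not_and_or, not_le] at hs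
      have : ε < |s| := by
        rcases hs with h | h
        · rw [abs_of_neg (by linarith)]; linarith
        · rw [abs_of_pos (by linarith)]; linarith
      rw [hw_zero ε hε s this, mul_zero]
  have hw_one : ∀ ε : ℝ, 0 < ε → (∫ s : ℝ, ε⁻¹ * g (s / ε)) = 1 := by
    intro ε hε
    rw [MeasureTheory.integral_const_mul, MeasureTheory.Measure.integral_comp_div g ε,
      smul_eq_mul, hg_int, abs_of_pos hε]
    field_simp
  have hw_odd : ∀ ε : ℝ, 0 < ε → (∫ s : ℝ, s * (ε⁻¹ * g (s / ε))) = 0 := by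
    intro ε hε
    have hodd : ∀ s : ℝ, (-s) * (ε⁻¹ * g ((-s) / ε)) = -(s * (ε⁻¹ * g (s / ε))) := by
      intro s
      rw [neg_div, hg_even]
      ring
    have h1 : (∫ s : ℝ, (fun u : ℝ => u * (ε⁻¹ * g (u / ε))) (-s))
        = ∫ s : ℝ, s * (ε⁻¹ * g (s / ε)) :=
      integral_neg_eq_self (fun u : ℝ => u * (ε⁻¹ * g (u / ε))) volume
    simp only [hodd] at h1
    rw [integral_neg] at h1
    linarith
  -- bounds for chiEps
  have heps_le : ∀ ε : ℝ, 0 < ε → ∀ u : ℝ, chiEps χ g ε u ≤ χ (u + ε) := by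
    intro ε hε u
    have hpt : ∀ s : ℝ, χ (u - s) * (ε⁻¹ * g (s / ε)) ≤ χ (u + ε) * (ε⁻¹ * g (s / ε)) := by
      intro s
      by_cases hs : ε⁻¹ * g (s / ε) = 0
      · rw [hs, mul_zero, mul_zero]
      · obtain ⟨h1, h2⟩ := habs_le ε hε s hs
        exact mul_le_mul_of_nonneg_right (hmono (by linarith)) (hw_nn ε hε s)
    calc chiEps χ g ε u = ∫ s : ℝ, χ (u - s) * (ε⁻¹ * g (s / ε)) := rfl
    _ ≤ ∫ s : ℝ, χ (u + ε) * (ε⁻¹ * g (s / ε)) :=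
        integral_mono (hint ε hε _ (hcont.comp (continuous_const.sub continuous_id)))
          (hint ε hε _ continuous_const) hpt
    _ = χ (u + ε) * ∫ s : ℝ, ε⁻¹ * g (s / ε) := integral_const_mul _ _
    _ = χ (u + ε) := by rw [hw_one ε hε, mul_one]
  have heps_ge : ∀ ε : ℝ, 0 < ε → ∀ u : ℝ, χ (u - ε) ≤ chiEps χ g ε u := by
    intro ε hε u
    have hpt : ∀ s : ℝ, χ (u - ε) * (ε⁻¹ * g (s / ε)) ≤ χ (u - s) * (ε⁻¹ * g (s / ε)) := by
      intro s
      by_cases hs : ε⁻¹ * g (s / ε) = 0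
      · rw [hs, mul_zero, mul_zero]
      · obtain ⟨h1, h2⟩ := habs_le ε hε s hs
        exact mul_le_mul_of_nonneg_right (hmono (by linarith)) (hw_nn ε hε s)
    calc χ (u - ε) = χ (u - ε) * ∫ s : ℝ, ε⁻¹ * g (s / ε) := by rw [hw_one ε hε, mul_one]
    _ = ∫ s : ℝ, χ (u - ε) * (ε⁻¹ * g (s / ε)) := (integral_const_mul _ _).symm
    _ ≤ ∫ s : ℝ, χ (u - s) * (ε⁻¹ * g (s / ε)) :=
        integral_mono (hint ε hε _ continuous_const)
          (hint ε hε _ (hcont.comp (continuous_const.sub continuous_id))) hpt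
    _ = chiEps χ g ε u := rfl
  -- linearity of chiBar on [-δ, ∞)
  have hbar_lin : ∀ ε : ℝ, 0 < ε → ∀ t : ℝ, -δ ≤ t → chiBar χ g c ε t = c * t := by
    intro ε hε t ht
    have hptwise : (fun s : ℝ => χ (t + ε - s) * (ε⁻¹ * g (s / ε)))
        = fun s : ℝ => (c * (t + ε)) * (ε⁻¹ * g (s / ε)) - c * (s * (ε⁻¹ * g (s / ε))) := by
      funext s
      by_cases hs : ε⁻¹ * g (s / ε) = 0
      · rw [hs]; ring
      · obtain ⟨h1, h2⟩ := habs_le ε hε s hs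
        rw [hχlin (t + ε - s) (by linarith)]
        ring
    show (∫ s : ℝ, χ (t + ε - s) * (ε⁻¹ * g (s / ε))) - c * ε = c * t
    have hIa : Integrable (fun s : ℝ => c * (t + ε) * (ε⁻¹ * g (s / ε))) volume :=
      hint ε hε _ continuous_const
    have hIb : Integrable (fun s : ℝ => c * (s * (ε⁻¹ * g (s / ε)))) volume :=
      (hint ε hε (fun s => s) continuous_id).const_mul c
    rw [hptwise, integral_sub hIa hIb, integral_const_mul (c * (t + ε)), hw_one ε hε,
      integral_const_mul c, hw_odd ε hε]
    ring
  have hbar_zero : ∀ ε : ℝ, 0 < ε → chiBar χ g c ε 0 = 0 := by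
    intro ε hε
    rw [hbar_lin ε hε 0 (by linarith), mul_zero]
  -- comparison bounds
  have hbar_ge : ∀ ε : ℝ, 0 < ε → ∀ t : ℝ, χ t - c * ε ≤ chiBar χ g c ε t := by
    intro ε hε t
    have := heps_ge ε hε (t + ε)
    rw [add_sub_cancel_right] at this
    show χ t - c * ε ≤ chiEps χ g ε (t + ε) - c * ε
    linarith
  have hbar_le : ∀ ε : ℝ, 0 < ε → ∀ t : ℝ, chiBar χ g c ε t ≤ χ (t + 2 * ε) - c * ε := by
    intro ε hε t
    have := heps_le ε hε (t + ε)
    rw [show t + ε + ε = t + 2 * ε by ring] at this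
    show chiEps χ g ε (t + ε) - c * ε ≤ χ (t + 2 * ε) - c * ε
    linarith
  -- monotonicity of chiBar
  have hbar_mono : ∀ ε : ℝ, 0 < ε → Monotone (chiBar χ g c ε) := by
    intro ε hε x y hxy
    have hpt : ∀ s : ℝ, χ (x + ε - s) * (ε⁻¹ * g (s / ε)) ≤ χ (y + ε - s) * (ε⁻¹ * g (s / ε)) :=
      fun s => mul_le_mul_of_nonneg_right (hmono (by linarith)) (hw_nn ε hε s)
    have : chiEps χ g ε (x + ε) ≤ chiEps χ g ε (y + ε) :=
      integral_mono (hint ε hε _ (hcont.comp (continuous_const.sub continuous_id)))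
        (hint ε hε _ (hcont.comp (continuous_const.sub continuous_id))) hpt
    show chiEps χ g ε (x + ε) - c * ε ≤ chiEps χ g ε (y + ε) - c * ε
    linarith
  -- concavity of chiBar
  have hbar_conc : ∀ ε : ℝ, 0 < ε → ConcaveOn ℝ Set.univ (chiBar χ g c ε) := by
    intro ε hε
    refine ⟨convex_univ, ?_⟩
    intro x _ y _ a b ha hb hab
    simp only [smul_eq_mul, chiBar]
    have hpt : ∀ s : ℝ, a * (χ (x + ε - s) * (ε⁻¹ * g (s / ε)))
        + b * (χ (y + ε - s) * (ε⁻¹ * g (s / ε)))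
        ≤ χ (a * x + b * y + ε - s) * (ε⁻¹ * g (s / ε)) := by
      intro s
      have hcomb := hconcU.2 (mem_univ (x + ε - s)) (mem_univ (y + ε - s)) ha hb hab
      simp only [smul_eq_mul] at hcomb
      have harg : a * (x + ε - s) + b * (y + ε - s) = a * x + b * y + ε - s := by
        linear_combination (ε - s) * hab
      rw [harg] at hcomb
      have hw := hw_nn ε hε s
      calc a * (χ (x + ε - s) * (ε⁻¹ * g (s / ε))) + b * (χ (y + ε - s) * (ε⁻¹ * g (s / ε)))
          = (a * χ (x + ε - s) + b * χ (y + ε - s)) * (ε⁻¹ * g (s / ε)) := by ring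
      _ ≤ χ (a * x + b * y + ε - s) * (ε⁻¹ * g (s / ε)) :=
          mul_le_mul_of_nonneg_right hcomb hw
    have hI1 : Integrable (fun s : ℝ => χ (x + ε - s) * (ε⁻¹ * g (s / ε))) volume :=
      hint ε hε _ (hcont.comp (continuous_const.sub continuous_id))
    have hI2 : Integrable (fun s : ℝ => χ (y + ε - s) * (ε⁻¹ * g (s / ε))) volume :=
      hint ε hε _ (hcont.comp (continuous_const.sub continuous_id))
    have hI3 : Integrable (fun s : ℝ => χ (a * x + b * y + ε - s) * (ε⁻¹ * g (s / ε))) volume :=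
      hint ε hε _ (hcont.comp (continuous_const.sub continuous_id))
    have hIle : a * chiEps χ g ε (x + ε) + b * chiEps χ g ε (y + ε)
        ≤ chiEps χ g ε (a * x + b * y + ε) := by
      have h : (∫ s : ℝ, (a * (χ (x + ε - s) * (ε⁻¹ * g (s / ε)))
            + b * (χ (y + ε - s) * (ε⁻¹ * g (s / ε)))))
          ≤ ∫ s : ℝ, χ (a * x + b * y + ε - s) * (ε⁻¹ * g (s / ε)) :=
        integral_mono ((hI1.const_mul a).add (hI2.const_mul b)) hI3 hpt
      rw [integral_add (hI1.const_mul a) (hI2.const_mul b), integral_const_mul a,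
        integral_const_mul b] at h
      exact h
    have hgoal : a * (chiEps χ g ε (x + ε) - c * ε) + b * (chiEps χ g ε (y + ε) - c * ε)
        = a * chiEps χ g ε (x + ε) + b * chiEps χ g ε (y + ε) - c * ε := by
      linear_combination (-(c * ε)) * hab
    rw [hgoal]
    linarith
  have hbar_cont : ∀ ε : ℝ, 0 < ε → Continuous (chiBar χ g c ε) :=
    fun ε hε => continuousOn_univ.1 ((hbar_conc ε hε).continuousOn isOpen_univ)
  -- strict monotonicity on Iic 0
  have hbar_smono : ∀ ε : ℝ, 0 < ε → StrictMonoOn (chiBar χ g c ε) (Set.Iic 0) := by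
    intro ε hε x hx y hy hxy
    rcases eq_or_lt_of_le (hbar_mono ε hε hxy.le) with heq | h
    · exfalso
      have hb1 : chiBar χ g c ε 1 = c := by
        rw [hbar_lin ε hε 1 (by linarith), mul_one]
      have h1x : 0 < 1 - x := by have := mem_Iic.1 hx; linarith
      obtain ⟨bc, hbc⟩ : ∃ bc : ℝ, bc = (y - x) / (1 - x) := ⟨_, rfl⟩
      have hb0 : 0 < bc := by rw [hbc]; exact div_pos (by linarith) h1x
      have hb1' : bc ≤ 1 := by
        rw [hbc, div_le_one h1x]
        have := mem_Iic.1 hy; linarith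
      have hcomb := (hbar_conc ε hε).2 (mem_univ x) (mem_univ 1)
        (by linarith : (0:ℝ) ≤ 1 - bc) hb0.le (by ring)
      have hmul : bc * (1 - x) = y - x := by
        rw [hbc]; exact div_mul_cancel₀ _ (ne_of_gt h1x)
      have harg : (1 - bc) • x + bc • (1:ℝ) = y := by
        simp only [smul_eq_mul, mul_one]
        nlinarith [hmul]
      rw [harg] at hcomb
      simp only [smul_eq_mul, mul_one] at hcomb
      -- hcomb : (1-bc) * chiBar x + bc * chiBar 1 ≤ chiBar y
      have h2 : bc * chiBar χ g c ε 1 ≤ bc * chiBar χ g c ε x := by nlinarith [hcomb, heq]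
      have h3 : chiBar χ g c ε 1 ≤ chiBar χ g c ε x := le_of_mul_le_mul_left h2 hb0
      have h4 : chiBar χ g c ε x ≤ chiBar χ g c ε 0 := hbar_mono ε hε (mem_Iic.1 hx)
      rw [hb1, hbar_zero ε hε] at *
      linarith
    · exact h
  refine ⟨?_, ?_⟩
  · -- part 1
    intro ε hε hε8
    have hδ2 : δ ^ 2 ≤ δ := by nlinarith
    have h2εδ : 2 * ε < δ := by nlinarith
    have hM' : 1 ≤ M / (1 - δ) ^ 2 := by
      rw [le_div_iff₀ (by nlinarith : (0:ℝ) < (1 - δ) ^ 2)]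
      nlinarith
    have hbar_nonpos : ∀ t ≤ (0:ℝ), chiBar χ g c ε t ≤ 0 := by
      intro t ht
      have := hbar_mono ε hε ht
      rwa [hbar_zero ε hε] at this
    have hbar_neg : ∀ t < (0:ℝ), chiBar χ g c ε t < 0 := by
      intro t ht
      have := hbar_smono ε hε (mem_Iic.2 ht.le) (mem_Iic.2 le_rfl) ht
      rwa [hbar_zero ε hε] at this
    have hder : ∀ t < (0:ℝ), ∀ d : ℝ, HasDerivAt (chiBar χ g c ε) d t
        → |t * d| ≤ M / (1 - δ) ^ 2 * |chiBar χ g c ε t| := by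
      intro t ht d hd
      have hd0 : 0 ≤ d := by
        have htan := concave_tangent_le (hbar_conc ε hε) hd (t + 1)
        have hm := hbar_mono ε hε (by linarith : t ≤ t + 1)
        rw [show t + 1 - t = 1 by ring, mul_one] at htan
        linarith
      have hBt : chiBar χ g c ε t ≤ 0 := hbar_nonpos t ht.le
      have habs1 : |t * d| = (-t) * d := by
        rw [abs_of_nonpos (mul_nonpos_iff.2 (Or.inr ⟨ht.le, hd0⟩))]
        ring
      have habs2 : |chiBar χ g c ε t| = -(chiBar χ g c ε t) := abs_of_nonpos hBt
      rw [habs1, habs2]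
      rcases le_or_gt t (-δ) with htδ | htδ
      · -- main case : t ≤ -δ
        have ht2ε : t + 2 * ε < 0 := by linarith
        have hstep : ∀ h : ℝ, 0 < h →
            d ≤ M / (h - t - 2 * ε) * (-(chiBar χ g c ε (t - h)) - c * ε) := by
          intro h hh
          have hden : 0 < h - t - 2 * ε := by linarith
          have hpt : ∀ s : ℝ, χ (t + ε - s) * (ε⁻¹ * g (s / ε))
              - χ (t - h + ε - s) * (ε⁻¹ * g (s / ε))
              ≤ (M * h / (h - t - 2 * ε)) * (-(χ (t - h + ε - s)) * (ε⁻¹ * g (s / ε))) := by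
            intro s
            by_cases hs : ε⁻¹ * g (s / ε) = 0
            · rw [hs]; simp
            · obtain ⟨h1, h2⟩ := habs_le ε hε s hs
              have ha' : t - h + ε - s < 0 := by linarith
              have hb' : t - h + ε - s < t + ε - s := by linarith
              have hS := hstar _ ha' _ hb'
              rw [show (t + ε - s) - (t - h + ε - s) = h by ring] at hS
              have hchi_np : χ (t - h + ε - s) ≤ 0 := by
                have := hmono ha'.le; rwa [hzero] at this
              have hfrac : M * (-χ (t - h + ε - s)) / (-(t - h + ε - s))
                  ≤ M * (-χ (t - h + ε - s)) / (h - t - 2 * ε) := by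
                apply div_le_div_of_nonneg_left (by nlinarith) hden (by linarith)
              have hw := hw_nn ε hε s
              calc χ (t + ε - s) * (ε⁻¹ * g (s / ε)) - χ (t - h + ε - s) * (ε⁻¹ * g (s / ε))
                  = (χ (t + ε - s) - χ (t - h + ε - s)) * (ε⁻¹ * g (s / ε)) := by ring
              _ ≤ (M * (-χ (t - h + ε - s)) / (h - t - 2 * ε) * h) * (ε⁻¹ * g (s / ε)) := by
                  apply mul_le_mul_of_nonneg_right _ hw
                  exact le_trans hS (mul_le_mul_of_nonneg_right hfrac hh.le)
              _ = (M * h / (h - t - 2 * ε)) * (-(χ (t - h + ε - s)) * (ε⁻¹ * g (s / ε))) := by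
                  ring
          have hI1 : Integrable (fun s : ℝ => χ (t + ε - s) * (ε⁻¹ * g (s / ε))) volume :=
            hint ε hε _ (hcont.comp (continuous_const.sub continuous_id))
          have hI2 : Integrable (fun s : ℝ => χ (t - h + ε - s) * (ε⁻¹ * g (s / ε))) volume :=
            hint ε hε _ (hcont.comp (continuous_const.sub continuous_id))
          have hI3 : Integrable (fun s : ℝ => M * h / (h - t - 2 * ε)
              * (-χ (t - h + ε - s) * (ε⁻¹ * g (s / ε)))) volume :=
            (hint ε hε (fun s => -χ (t - h + ε - s))
              ((hcont.comp (continuous_const.sub continuous_id)).neg)).const_mul _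
          have hImono : (∫ s : ℝ, (χ (t + ε - s) * (ε⁻¹ * g (s / ε))
                - χ (t - h + ε - s) * (ε⁻¹ * g (s / ε))))
              ≤ ∫ s : ℝ, M * h / (h - t - 2 * ε)
                * (-χ (t - h + ε - s) * (ε⁻¹ * g (s / ε))) :=
            integral_mono (hI1.sub hI2) hI3 hpt
          rw [integral_sub hI1 hI2, integral_const_mul] at hImono
          have hIneg : (∫ s : ℝ, -χ (t - h + ε - s) * (ε⁻¹ * g (s / ε)))
              = - chiEps χ g ε (t - h + ε) := by
            rw [show (fun s : ℝ => -χ (t - h + ε - s) * (ε⁻¹ * g (s / ε)))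
              = fun s : ℝ => -(χ (t - h + ε - s) * (ε⁻¹ * g (s / ε))) from
              funext fun s => by ring, integral_neg]
            rfl
          rw [hIneg] at hImono
          -- tangent inequality
          have htan := concave_tangent_le (hbar_conc ε hε) hd (t - h)
          rw [show t - h - t = -h by ring, mul_neg] at htan
          have hBB : chiBar χ g c ε t - chiBar χ g c ε (t - h)
              = chiEps χ g ε (t + ε) - chiEps χ g ε (t - h + ε) := by
            simp only [chiBar]; ring
          have hEB : - chiEps χ g ε (t - h + ε) = -(chiBar χ g c ε (t - h)) - c * ε := by
            simp only [chiBar]; ring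
          rw [hEB] at hImono
          have hA : (∫ s : ℝ, χ (t + ε - s) * (ε⁻¹ * g (s / ε))) = chiEps χ g ε (t + ε) := rfl
          have hB : (∫ s : ℝ, χ (t - h + ε - s) * (ε⁻¹ * g (s / ε)))
              = chiEps χ g ε (t - h + ε) := rfl
          have hfin : d * h ≤ M * h / (h - t - 2 * ε) * (-(chiBar χ g c ε (t - h)) - c * ε) := by
            linarith [hImono, hA, hB, htan, hBB]
          have hEq : M * h / (h - t - 2 * ε) * (-(chiBar χ g c ε (t - h)) - c * ε)
              = (M / (h - t - 2 * ε) * (-(chiBar χ g c ε (t - h)) - c * ε)) * h := by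
            ring
          rw [hEq] at hfin
          exact le_of_mul_le_mul_right (by linarith [hfin]) hh
        -- limit as h → 0⁺ along 1/(n+1)
        have hseq : ∀ n : ℕ, d ≤ M / (1 / ((n:ℝ) + 1) - t - 2 * ε)
            * (-(chiBar χ g c ε (t - 1 / ((n:ℝ) + 1))) - c * ε) :=
          fun n => hstep _ (by positivity)
        have h0 : Tendsto (fun n : ℕ => 1 / ((n:ℝ) + 1)) atTop (nhds 0) :=
          tendsto_one_div_add_atTop_nhds_zero_nat
        have hne : (0:ℝ) - t - 2 * ε ≠ 0 := by intro hcon; linarith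
        have h1 : Tendsto (fun n : ℕ => t - 1 / ((n:ℝ) + 1)) atTop (nhds t) := by
          simpa using tendsto_const_nhds.sub h0
        have h2 : Tendsto (fun n : ℕ => chiBar χ g c ε (t - 1 / ((n:ℝ) + 1))) atTop
            (nhds (chiBar χ g c ε t)) := ((hbar_cont ε hε).tendsto t).comp h1
        have h3 : Tendsto (fun n : ℕ => 1 / ((n:ℝ) + 1) - t - 2 * ε) atTop
            (nhds ((0:ℝ) - t - 2 * ε)) := (h0.sub_const t).sub_const (2 * ε)
        have h4 : Tendsto (fun n : ℕ => M / (1 / ((n:ℝ) + 1) - t - 2 * ε)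
            * (-(chiBar χ g c ε (t - 1 / ((n:ℝ) + 1))) - c * ε)) atTop
            (nhds (M / ((0:ℝ) - t - 2 * ε) * (-(chiBar χ g c ε t) - c * ε))) :=
          (tendsto_const_nhds.div h3 hne).mul (h2.neg.sub_const (c * ε))
        have hdle : d ≤ M / ((0:ℝ) - t - 2 * ε) * (-(chiBar χ g c ε t) - c * ε) :=
          ge_of_tendsto h4 (Eventually.of_forall hseq)
        -- final arithmetic
        have hQnn : 0 ≤ M / ((0:ℝ) - t - 2 * ε) :=
          div_nonneg (by linarith) (by linarith)
        have hdle2 : d ≤ M / ((0:ℝ) - t - 2 * ε) * (-(chiBar χ g c ε t)) := by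
          have := mul_le_mul_of_nonneg_left
            (show -(chiBar χ g c ε t) - c * ε ≤ -(chiBar χ g c ε t) by nlinarith [hc, hε]) hQnn
          linarith
        have hcoef : (-t) * M / ((0:ℝ) - t - 2 * ε) ≤ M / (1 - δ) ^ 2 := by
          rw [div_le_div_iff₀ (by linarith : (0:ℝ) < (0:ℝ) - t - 2 * ε)
            (by nlinarith : (0:ℝ) < (1 - δ) ^ 2)]
          have hkey : 2 * ε ≤ (-t) * (2 * δ - δ ^ 2) := by
            nlinarith [mul_nonneg (by linarith : (0:ℝ) ≤ -t - δ)
              (by nlinarith : (0:ℝ) ≤ 2 * δ - δ ^ 2),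
              mul_nonneg (sq_nonneg δ) (by linarith : (0:ℝ) ≤ 1 - δ)]
          nlinarith [mul_le_mul_of_nonneg_left hkey (by linarith : (0:ℝ) ≤ M)]
        calc (-t) * d ≤ (-t) * (M / ((0:ℝ) - t - 2 * ε) * (-(chiBar χ g c ε t))) :=
            mul_le_mul_of_nonneg_left hdle2 (by linarith)
        _ = ((-t) * M / ((0:ℝ) - t - 2 * ε)) * (-(chiBar χ g c ε t)) := by ring
        _ ≤ M / (1 - δ) ^ 2 * (-(chiBar χ g c ε t)) :=
            mul_le_mul_of_nonneg_right hcoef (by linarith)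
      · -- easy case : -δ < t < 0
        have heqev : chiBar χ g c ε =ᶠ[nhds t] fun u => c * u := by
          filter_upwards [Ioi_mem_nhds htδ] with u hu
          exact hbar_lin ε hε u (le_of_lt hu)
        have hd' : HasDerivAt (fun u : ℝ => c * u) d t := hd.congr_of_eventuallyEq heqev.symm
        have hc' : HasDerivAt (fun u : ℝ => c * u) c t := by
          simpa using (hasDerivAt_id t).const_mul c
        have hdc : d = c := hd'.unique hc'
        rw [hdc, hbar_lin ε hε t (by linarith)]
        have h1 : (-t) * c = -(chiBar χ g c ε t) * 1 := by
          rw [hbar_lin ε hε t (by linarith)]; ring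
        have h2 : -(c * t) = (-t) * c := by ring
        rw [← h2]
        calc -(c * t) = 1 * (-(c * t)) := by ring
        _ ≤ M / (1 - δ) ^ 2 * (-(c * t)) := by
            apply mul_le_mul_of_nonneg_right hM'
            nlinarith
    exact ⟨⟨(hbar_conc ε hε).subset (subset_univ _) (convex_Iic 0), hbar_smono ε hε,
      hbar_nonpos, hbar_zero ε hε, hbar_neg, hder⟩, hbar_ge ε hε⟩
  · -- part 2 : uniform convergence on compacts
    intro K hK
    rw [Metric.tendstoUniformlyOn_iff]
    intro η hη
    obtain ⟨r, hr⟩ := hK.isBounded.subset_closedBall 0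
    have hs : IsCompact (Set.Icc (-(r + 1)) (r + 1)) := isCompact_Icc
    have huc := hs.uniformContinuousOn_of_continuous hcont.continuousOn
    rw [Metric.uniformContinuousOn_iff] at huc
    obtain ⟨θ, hθ0, hθ⟩ := huc (η / 2) (by linarith)
    obtain ⟨ε₀, hε₀⟩ : ∃ ε₀ : ℝ, ε₀ = min (min (θ / 2) (1 / 2)) (η / (4 * c)) := ⟨_, rfl⟩
    have hε₀pos : 0 < ε₀ := by
      rw [hε₀]
      apply lt_min (lt_min (by linarith) (by norm_num)) (by positivity)
    filter_upwards [Ioo_mem_nhdsGT hε₀pos] with ε hεI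
    intro x hxK
    have hε : 0 < ε := hεI.1
    have hεθ : ε < θ / 2 := lt_of_lt_of_le hεI.2
      (by rw [hε₀]; exact le_trans (min_le_left _ _) (min_le_left _ _))
    have hεhalf : ε < 1 / 2 := lt_of_lt_of_le hεI.2
      (by rw [hε₀]; exact le_trans (min_le_left _ _) (min_le_right _ _))
    have hεη : ε < η / (4 * c) := lt_of_lt_of_le hεI.2 (by rw [hε₀]; exact min_le_right _ _)
    have hb1 := hbar_ge ε hε x
    have hb2 := hbar_le ε hε x
    have hxr : x ∈ Metric.closedBall (0:ℝ) r := hr hxK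
    rw [Real.closedBall_eq_Icc, mem_Icc] at hxr
    have hx1 : x ∈ Set.Icc (-(r + 1)) (r + 1) := by
      rw [mem_Icc]; constructor <;> linarith [hxr.1, hxr.2]
    have hx2 : x + 2 * ε ∈ Set.Icc (-(r + 1)) (r + 1) := by
      rw [mem_Icc]; constructor <;> linarith [hxr.1, hxr.2]
    have hdist : dist (x + 2 * ε) x < θ := by
      rw [Real.dist_eq, show x + 2 * ε - x = 2 * ε by ring, abs_of_pos (by linarith)]
      linarith
    have hχd := hθ _ hx2 _ hx1 hdist
    rw [Real.dist_eq] at hχd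
    have hχ2 : χ (x + 2 * ε) - χ x < η / 2 :=
      lt_of_le_of_lt (le_abs_self _) hχd
    have hcε : c * ε < η / 2 := by
      have h' : c * ε < c * (η / (4 * c)) := by
        exact mul_lt_mul_of_pos_left hεη hc
      have h'' : c * (η / (4 * c)) = η / 4 := by
        field_simp
      nlinarith
    rw [Real.dist_eq, abs_lt]
    constructor
    · linarith [mul_pos hc hε]
    · linarith [mul_pos hc hε]
end
end

section
/- Let M ≥ 1 and let χ, χ̃ ∈ W̃⁻ ∪ W_M^+ with χ̃ ≤ χ on (−∞,0] and χ̃(−1) < 0. Define Q: (0,∞) → (0,∞) by Q(t) := 1 for t ≥ 1; and for 0 < t < 1 by Q(t) := (Q₀(t)/Q₀(1))^{1/2} if χ ∈ W̃⁻, and Q(t) := t^{1/2} if χ ∈ W_M^+. (If χ ∈ W̃⁻, then Q₀(1) > 0, so Q is well defined.) Then the function h(t) := Q(t)²/t is non-increasing on (0,∞). In particular, if χ ∈ W̃⁻, then Q₀(t₁)/t₁ ≤ Q₀(t₂)/t₂ for all 0 < t₂ < t₁ ≤ 1. -/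
open MeasureTheory Filter Set

noncomputable section

/-- The class `W̃⁻` of convex, non-decreasing weights `χ : (-∞,0] → (-∞,0]` with
`χ(0) = 0` and `χ ≢ 0`. -/
def WtildeMinus (χ : ℝ → ℝ) : Prop :=
  ConvexOn ℝ (Set.Iic 0) χ ∧ MonotoneOn χ (Set.Iic 0) ∧ (∀ t ≤ (0:ℝ), χ t ≤ 0) ∧
    χ 0 = 0 ∧ ∃ t ≤ (0:ℝ), χ t ≠ 0

/-- `Q₀(ε) = sup_{t ≤ -1} χ(εt)/χ̃(t)`. -/
def Q0 (χ χt : ℝ → ℝ) (ε : ℝ) : ℝ :=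
  sSup ((fun t => χ (ε * t) / χt t) '' Set.Iic (-1))

theorem stmt6 (M : ℝ) (hM : 1 ≤ M) (χ χt : ℝ → ℝ) (Q : ℝ → ℝ)
    (hχt : WtildeMinus χt ∨ WMPlus M χt)
    (hle : ∀ t ≤ (0:ℝ), χt t ≤ χ t)
    (hχt1 : χt (-1) < 0)
    (hQ1 : ∀ t : ℝ, 1 ≤ t → Q t = 1)
    (hcase :
      (WtildeMinus χ ∧ ∀ t : ℝ, 0 < t → t < 1 →
          Q t = Real.sqrt (Q0 χ χt t / Q0 χ χt 1))
      ∨ (WMPlus M χ ∧ ∀ t : ℝ, 0 < t → t < 1 → Q t = Real.sqrt t)) :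
    AntitoneOn (fun t => Q t ^ 2 / t) (Set.Ioi 0) ∧
    (WtildeMinus χ → ∀ t₁ t₂ : ℝ, 0 < t₂ → t₂ < t₁ → t₁ ≤ 1 →
      Q0 χ χt t₁ / t₁ ≤ Q0 χ χt t₂ / t₂) := by
  classical
  have hχtmono : MonotoneOn χt (Set.Iic 0) := by
    rcases hχt with h | h
    · exact h.2.1
    · exact h.2.1.monotoneOn
  have hχtneg : ∀ t : ℝ, t ≤ -1 → χt t < 0 := by
    intro t ht
    have h1 := hχtmono (show t ∈ Set.Iic (0:ℝ) by simp only [Set.mem_Iic]; linarith)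
      (show (-1:ℝ) ∈ Set.Iic (0:ℝ) by norm_num) ht
    linarith
  -- elements of the defining set are in [0,1] for 0 < ε ≤ 1
  have helem : ∀ ε : ℝ, 0 < ε → WtildeMinus χ → ∀ t : ℝ, t ≤ -1 →
      0 ≤ χ (ε * t) / χt t := by
    intro ε hε hχ t ht
    have h1 : ε * t ≤ 0 := mul_nonpos_of_nonneg_of_nonpos hε.le (by linarith)
    rw [div_nonneg_iff]
    exact Or.inr ⟨hχ.2.2.1 _ h1, (hχtneg t ht).le⟩
  have hub : ∀ ε : ℝ, 0 < ε → ε ≤ 1 → WtildeMinus χ → ∀ t : ℝ, t ≤ -1 →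
      χ (ε * t) / χt t ≤ 1 := by
    intro ε hε hε1 hχ t ht
    have hct := hχtneg t ht
    have ht0 : t ≤ 0 := by linarith
    have h1 : ε * t ≤ 0 := mul_nonpos_of_nonneg_of_nonpos hε.le ht0
    have h2 : t ≤ ε * t := by nlinarith
    have h3 : χ t ≤ χ (ε * t) := hχ.2.1 (Set.mem_Iic.mpr ht0) (Set.mem_Iic.mpr h1) h2
    have h4 : χt t ≤ χ (ε * t) := le_trans (hle t ht0) h3
    rw [div_le_iff_of_neg hct]
    linarith
  have hbdd : ∀ ε : ℝ, 0 < ε → ε ≤ 1 → WtildeMinus χ →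
      BddAbove ((fun t => χ (ε * t) / χt t) '' Set.Iic (-1)) := by
    intro ε hε hε1 hχ
    refine ⟨1, ?_⟩
    rintro x ⟨t, ht, rfl⟩
    exact hub ε hε hε1 hχ t (Set.mem_Iic.mp ht)
  have hQ0nn : ∀ ε : ℝ, 0 < ε → WtildeMinus χ → 0 ≤ Q0 χ χt ε := by
    intro ε hε hχ
    apply Real.sSup_nonneg
    rintro x ⟨t, ht, rfl⟩
    exact helem ε hε hχ t (Set.mem_Iic.mp ht)
  -- the key monotonicity
  have key : WtildeMinus χ → ∀ ε₁ ε₂ : ℝ, 0 < ε₂ → ε₂ ≤ ε₁ → ε₁ ≤ 1 →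
      Q0 χ χt ε₁ / ε₁ ≤ Q0 χ χt ε₂ / ε₂ := by
    intro hχ ε₁ ε₂ hε₂ h21 h11
    have hε₁ : 0 < ε₁ := lt_of_lt_of_le hε₂ h21
    obtain ⟨hcv, hmono, hnp, h0, hex⟩ := hχ
    have hscale : ∀ s ≤ (0:ℝ), ∀ l : ℝ, 0 ≤ l → l ≤ 1 → χ (l * s) ≤ l * χ s := by
      intro s hs l hl0 hl1
      have h := hcv.2 (Set.mem_Iic.mpr hs) (Set.mem_Iic.mpr (le_refl (0:ℝ)))
        hl0 (by linarith : (0:ℝ) ≤ 1 - l) (by ring)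
      simpa [h0, smul_eq_mul] using h
    have hmain : Q0 χ χt ε₁ ≤ (ε₁ / ε₂) * Q0 χ χt ε₂ := by
      apply Real.sSup_le
      · rintro x ⟨t, htm, rfl⟩
        have ht : t ≤ -1 := Set.mem_Iic.mp htm
        have hct := hχtneg t ht
        have hs : ε₁ * t ≤ 0 :=
          mul_nonpos_of_nonneg_of_nonpos hε₁.le (by linarith)
        have h1 : χ (ε₂ * t) ≤ (ε₂ / ε₁) * χ (ε₁ * t) := by
          have h := hscale (ε₁ * t) hs (ε₂ / ε₁) (by positivity)
            ((div_le_one hε₁).mpr h21)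
          rwa [show ε₂ / ε₁ * (ε₁ * t) = ε₂ * t by field_simp] at h
        have h2 : (ε₁ / ε₂) * χ (ε₂ * t) ≤ χ (ε₁ * t) := by
          have h := mul_le_mul_of_nonneg_left h1 (by positivity : (0:ℝ) ≤ ε₁ / ε₂)
          calc (ε₁ / ε₂) * χ (ε₂ * t) ≤ (ε₁ / ε₂) * ((ε₂ / ε₁) * χ (ε₁ * t)) := h
            _ = χ (ε₁ * t) := by field_simp
        have h3 : χ (ε₁ * t) / χt t ≤ ((ε₁ / ε₂) * χ (ε₂ * t)) / χt t :=
          (div_le_div_right_of_neg hct).mpr h2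
        have h4 : χ (ε₂ * t) / χt t ≤ Q0 χ χt ε₂ :=
          le_csSup (hbdd ε₂ hε₂ (le_trans h21 h11) ⟨hcv, hmono, hnp, h0, hex⟩)
            (Set.mem_image_of_mem _ htm)
        calc χ (ε₁ * t) / χt t ≤ ((ε₁ / ε₂) * χ (ε₂ * t)) / χt t := h3
          _ = (ε₁ / ε₂) * (χ (ε₂ * t) / χt t) := by ring
          _ ≤ (ε₁ / ε₂) * Q0 χ χt ε₂ :=
              mul_le_mul_of_nonneg_left h4 (by positivity)
      · have := hQ0nn ε₂ hε₂ ⟨hcv, hmono, hnp, h0, hex⟩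
        positivity
    rw [div_le_div_iff₀ hε₁ hε₂]
    calc Q0 χ χt ε₁ * ε₂ ≤ ((ε₁ / ε₂) * Q0 χ χt ε₂) * ε₂ :=
          mul_le_mul_of_nonneg_right hmain hε₂.le
      _ = Q0 χ χt ε₂ * ε₁ := by field_simp
  -- positivity of Q0 at 1
  have hQ01pos : WtildeMinus χ → 0 < Q0 χ χt 1 := by
    intro hχ
    obtain ⟨hcv, hmono, hnp, h0, t₀, ht₀, hne⟩ := hχ
    have ht₀neg : χ t₀ < 0 := lt_of_le_of_ne (hnp t₀ ht₀) hne
    have ht₀lt : t₀ < 0 := by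
      rcases lt_or_eq_of_le ht₀ with h | h
      · exact h
      · exfalso; rw [h] at hne; exact hne h0
    have hm1 : χ (-1) < 0 := by
      by_cases hc : -1 ≤ t₀
      · have := hmono (Set.mem_Iic.mpr (by norm_num : (-1:ℝ) ≤ 0))
          (Set.mem_Iic.mpr ht₀) hc
        linarith
      · push_neg at hc
        -- t₀ < -1 ; use convexity scaling with l = -1/t₀ ∈ (0,1)
        have hl0 : (0:ℝ) < -1 / t₀ := div_pos_of_neg_of_neg (by norm_num) ht₀lt
        have hl1 : -1 / t₀ ≤ 1 := by
          rw [div_le_iff_of_neg ht₀lt]; linarith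
        have h := hcv.2 (Set.mem_Iic.mpr ht₀) (Set.mem_Iic.mpr (le_refl (0:ℝ)))
          hl0.le (by linarith : (0:ℝ) ≤ 1 - (-1 / t₀)) (by ring)
        simp only [smul_eq_mul, mul_zero, add_zero, h0] at h
        rw [div_mul_cancel₀ (-1) (ne_of_lt ht₀lt)] at h
        nlinarith
    have hel : 0 < χ (-1) / χt (-1) := div_pos_of_neg_of_neg hm1 hχt1
    have hmem : χ ((1:ℝ) * (-1)) / χt (-1) ∈
        ((fun t => χ ((1:ℝ) * t) / χt t) '' Set.Iic (-1)) :=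
      Set.mem_image_of_mem _ (Set.mem_Iic.mpr le_rfl)
    have := le_csSup (hbdd 1 one_pos le_rfl ⟨hcv, hmono, hnp, h0, t₀, ht₀, hne⟩) hmem
    have h1 : χ ((1:ℝ) * (-1)) / χt (-1) = χ (-1) / χt (-1) := by norm_num
    rw [h1] at this
    exact lt_of_lt_of_le hel this
  constructor
  · -- antitone part
    intro a ha b hb hab
    simp only [Set.mem_Ioi] at ha hb
    simp only
    by_cases hb1 : 1 ≤ b
    · by_cases ha1 : 1 ≤ a
      · rw [hQ1 a ha1, hQ1 b hb1, one_pow]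
        exact div_le_div_of_nonneg_left one_pos.le ha hab
      · push_neg at ha1
        rw [hQ1 b hb1, one_pow]
        have h1b : 1 / b ≤ 1 := by
          rw [div_le_one (by linarith : (0:ℝ) < b)]; linarith
        have h2 : 1 ≤ Q a ^ 2 / a := by
          rcases hcase with ⟨hχ, hQf⟩ | ⟨hχ, hQf⟩
          · have hpos := hQ01pos hχ
            have hnn : 0 ≤ Q0 χ χt a / Q0 χ χt 1 :=
              div_nonneg (hQ0nn a ha hχ) hpos.le
            rw [hQf a ha ha1, Real.sq_sqrt hnn]
            have hk := key hχ 1 a ha ha1.le le_rfl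
            rw [div_one] at hk
            rw [div_div, le_div_iff₀ (by positivity : (0:ℝ) < Q0 χ χt 1 * a), one_mul]
            linarith [(le_div_iff₀ ha).mp hk]
          · rw [hQf a ha ha1, Real.sq_sqrt ha.le, div_self ha.ne']
        linarith
    · push_neg at hb1
      have ha1 : a < 1 := lt_of_le_of_lt hab hb1
      rcases hcase with ⟨hχ, hQf⟩ | ⟨hχ, hQf⟩
      · have hpos := hQ01pos hχ
        have hnna : 0 ≤ Q0 χ χt a / Q0 χ χt 1 := div_nonneg (hQ0nn a ha hχ) hpos.le
        have hnnb : 0 ≤ Q0 χ χt b / Q0 χ χt 1 := div_nonneg (hQ0nn b hb hχ) hpos.le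
        rw [hQf a ha ha1, hQf b hb hb1, Real.sq_sqrt hnna, Real.sq_sqrt hnnb]
        have hk := key hχ b a ha hab hb1.le
        rw [div_div, div_div, mul_comm (Q0 χ χt 1) b, mul_comm (Q0 χ χt 1) a,
          ← div_div, ← div_div]
        exact (div_le_div_iff_of_pos_right hpos).mpr hk
      · rw [hQf a ha ha1, hQf b hb hb1, Real.sq_sqrt ha.le, Real.sq_sqrt hb.le,
          div_self ha.ne', div_self hb.ne']
  · intro hχ t₁ t₂ h2 h21 h11
    exact key hχ t₁ t₂ h2 h21.le h11
end
end

section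
/- Let M ≥ 1 and let χ ∈ W_M^+. Then for every real a ≥ 1 and every t ≤ 0 one has −χ(a·t) ≤ a^M · (−χ(t)). -/
open MeasureTheory Filter Set

open scoped Topology

noncomputable section

/-! For the convex function `φ = -χ` the inequality says that `s ↦ φ s * (-s) ^ (-M)` is
monotone on `(-∞, 0)`. Its right derivative is `(-s) ^ (-M - 1) * ((-s) * φ'₊ s + M * φ s)`,
which is nonnegative because `φ'₊ s ≥ M * φ s / s`: by convexity the right derivative at `s`
dominates the derivatives at the points just left of `s`, where `φ` is differentiable on a dense
set (Rademacher) and satisfies the derivative bound. -/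

theorem frequently_nhdsLT_of_ae {P : ℝ → Prop} (hP : ∀ᵐ p, P p) (x : ℝ) :
    ∃ᶠ p in 𝓝[<] x, P p := by
  rw [(nhdsLT_basis x).frequently_iff]
  intro l hl
  exact Measure.exists_mem_of_measure_ne_zero_of_ae (by simp [hl]) (ae_restrict_of_ae hP)

theorem ConvexOn.frequently_differentiableAt_nhdsLT {f : ℝ → ℝ} {S : Set ℝ} {x : ℝ}
    (hf : ConvexOn ℝ S f) (hx : x ∈ interior S) :
    ∃ᶠ p in 𝓝[<] x, DifferentiableAt ℝ f p := by
  obtain ⟨_, t, ht, hlip⟩ := hf.locallyLipschitzOn_interior hx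
  rw [isOpen_interior.nhdsWithin_eq hx, ← interior_mem_nhds] at ht
  refine ((frequently_nhdsLT_of_ae hlip.ae_differentiableWithinAt_of_mem_real x).and_eventually
    (nhdsWithin_le_nhds ht)).mono ?_
  rintro p ⟨hdiff, hp⟩
  exact (hdiff (interior_subset hp)).differentiableAt (mem_interior_iff_mem_nhds.mp hp)

theorem ConvexOn.le_rightDeriv_of_le_hasDerivAt {f g : ℝ → ℝ} {S : Set ℝ} {x : ℝ}
    (hf : ConvexOn ℝ S f) (hx : x ∈ interior S) (hg : ContinuousWithinAt g (Iio x) x)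
    (hbound : ∀ p ∈ S, p < x → ∀ d, HasDerivAt f d p → g p ≤ d) :
    g x ≤ derivWithin f (Ioi x) x := by
  have hS : ∀ᶠ p in 𝓝[<] x, p ∈ S :=
    nhdsWithin_le_nhds (mem_interior_iff_mem_nhds.mp hx)
  refine le_of_tendsto_of_frequently hg
    (((hf.frequently_differentiableAt_nhdsLT hx).and_eventually
      (hS.and self_mem_nhdsWithin)).mono ?_)
  rintro p ⟨hdiff, hpS, hpx : p < x⟩
  calc g p ≤ deriv f p := hbound p hpS hpx _ hdiff.hasDerivAt
    _ ≤ slope f p x := hf.le_slope_of_hasDerivAt hpS (interior_subset hx) hpx hdiff.hasDerivAt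
    _ ≤ derivWithin f (Iio x) x := hf.slope_le_leftDeriv_of_mem_interior hpS hx hpx
    _ ≤ derivWithin f (Ioi x) x := hf.leftDeriv_le_rightDeriv_of_mem_interior hx

theorem monotoneOn_of_hasDerivWithinAt_Ioi_nonneg {f f' : ℝ → ℝ} {D : Set ℝ}
    (hD : D.OrdConnected) (hf : ContinuousOn f D)
    (hf' : ∀ x ∈ D, HasDerivWithinAt f (f' x) (Ioi x) x) (hf'_nonneg : ∀ x ∈ D, 0 ≤ f' x) :
    MonotoneOn f D := by
  intro a ha b hb hab
  have hIcc : Icc a b ⊆ D := hD.out ha hb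
  have := image_le_of_deriv_right_le_deriv_boundary (f := fun x ↦ -f x) (f' := fun x ↦ -f' x)
    (B := fun _ ↦ -f a) (B' := 0) (hf.mono hIcc).neg
    (fun x hx ↦ (hasDerivWithinAt_Ioi_iff_Ici.mp (hf' x (hIcc (Ico_subset_Icc_self hx)))).neg)
    le_rfl continuousOn_const (fun _ _ ↦ hasDerivWithinAt_const _ _ _)
    (fun x hx ↦ neg_nonpos.mpr (hf'_nonneg x (hIcc (Ico_subset_Icc_self hx))))
    (right_mem_Icc.mpr hab)
  simpa using this

theorem ConvexOn.monotoneOn_mul_neg_rpow {f : ℝ → ℝ} {M : ℝ} (hf : ConvexOn ℝ (Iio 0) f)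
    (hbound : ∀ p < 0, ∀ d, HasDerivAt f d p → p * d ≤ M * f p) :
    MonotoneOn (fun s ↦ f s * (-s) ^ (-M)) (Iio 0) := by
  have hcont : ContinuousOn f (Iio 0) := hf.continuousOn isOpen_Iio
  have hpow : ∀ x < (0 : ℝ), HasDerivAt (fun s ↦ (-s) ^ (-M)) (-1 * -M * (-x) ^ (-M - 1)) x :=
    fun x hx ↦ (hasDerivAt_neg x).rpow_const (Or.inl (neg_ne_zero.mpr hx.ne))
  refine monotoneOn_of_hasDerivWithinAt_Ioi_nonneg ordConnected_Iio ?_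
    (fun x hx ↦ ((hf.hasDerivWithinAt_rightDeriv_of_mem_interior
      (by rwa [interior_Iio])).mul (hpow x hx).hasDerivWithinAt)) ?_
  · exact hcont.mul fun x hx ↦ (hpow x hx).continuousAt.continuousWithinAt
  intro x (hx : x < 0)
  have hg : ContinuousWithinAt (fun p ↦ M * f p / p) (Iio x) x :=
    ((continuousAt_const.mul (hcont.continuousAt (Iio_mem_nhds hx))).div continuousAt_id
      hx.ne).continuousWithinAt
  have hrd := hf.le_rightDeriv_of_le_hasDerivAt (by rwa [interior_Iio]) hg
    fun p (hp : p < 0) _ d hd ↦ (div_le_iff_of_neg hp).mpr (by linarith [hbound p hp d hd])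
  have hnonneg : 0 ≤ derivWithin f (Ioi x) x + M * f x / -x := by
    rwa [div_neg, ← sub_eq_add_neg, sub_nonneg]
  rw [Real.rpow_sub_one (neg_ne_zero.mpr hx.ne)]
  calc (0 : ℝ) ≤ (-x) ^ (-M) * (derivWithin f (Ioi x) x + M * f x / -x) :=
        mul_nonneg (Real.rpow_pos_of_pos (neg_pos.mpr hx) (-M)).le hnonneg
    _ = _ := by ring

theorem stmt9_general (M : ℝ) (χ : ℝ → ℝ) (hχ : WMPlus M χ) :
    ∀ a : ℝ, 1 ≤ a → ∀ t : ℝ, t ≤ 0 → -χ (a * t) ≤ a ^ M * (-χ t) := by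
  obtain ⟨hconc, -, hnonpos, hzero, -, hder⟩ := hχ
  have hmono : MonotoneOn (fun s ↦ -χ s * (-s) ^ (-M)) (Iio 0) := by
    refine (hconc.neg.subset Iio_subset_Iic_self (convex_Iio 0)).monotoneOn_mul_neg_rpow ?_
    intro p hp d hd
    have hbound := hder p hp (-d) (by simpa using hd.neg)
    rw [mul_neg, abs_neg, abs_of_nonpos (hnonpos p hp.le)] at hbound
    exact (le_abs_self _).trans hbound
  intro a ha t ht
  rcases ht.lt_or_eq with ht | rfl
  · have ha0 : 0 < a := by linarith
    have hscaled := hmono (mul_neg_of_pos_of_neg ha0 ht) ht (by nlinarith)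
    have hT : 0 < (-t) ^ (-M) := Real.rpow_pos_of_pos (neg_pos.mpr ht) _
    have hA : 0 < a ^ M := Real.rpow_pos_of_pos ha0 _
    simp only [← mul_neg, Real.mul_rpow ha0.le (neg_pos.mpr ht).le,
      Real.rpow_neg ha0.le] at hscaled
    rw [← mul_assoc, ← div_eq_mul_inv] at hscaled
    exact (div_le_iff₀' hA).mp (le_of_mul_le_mul_right hscaled hT)
  · simp [hzero]

theorem stmt9 (M : ℝ) (hM : 1 ≤ M) (χ : ℝ → ℝ) (hχ : WMPlus M χ) :
    ∀ a : ℝ, 1 ≤ a → ∀ t : ℝ, t ≤ 0 → -χ (a * t) ≤ a ^ M * (-χ t) :=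
  stmt9_general M χ hχ
end
end

section
/- Let M ≥ 1 and let χ̃ ∈ W_M^+ with χ̃(−1) = −1. Then χ̃(t) ≤ −(−t)^M for every −1 ≤ t ≤ 0, and χ̃(t) ≤ t for every t ≤ −1. -/
open MeasureTheory Filter Set
open scoped Topology

/-!
Concavity with `χ(0) = 0` makes `χ(t)/t` monotone, which gives `χ(t) ≤ t` for `t ≤ -1`.
On `[-1, 0)` the growth bound says `χ' ≤ M χ(t)/t` wherever `χ` is differentiable, i.e. almost
everywhere. By concavity, chords to the right of a point are no steeper than the derivative at
nearby differentiability points on its left, so the upper right Dini derivative of `χ` also obeys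
this bound everywhere. A comparison argument then keeps `χ` below `-(-t)^p` for every `p > M`,
because the power starts at `-1 = χ(-1)` and rises strictly faster wherever the two curves meet;
letting `p → M` gives the claim.
-/

noncomputable section

namespace ConcaveOn

variable {S : Set ℝ} {f : ℝ → ℝ}

lemma mul_le_mul_of_map_zero (hf : ConcaveOn ℝ S f) (h0 : (0 : ℝ) ∈ S) (hf0 : f 0 = 0)
    {s t : ℝ} (ht : t ∈ S) (hs : s ∈ S) (hts : t ≤ s) (hs0 : s < 0) :
    t * f s ≤ s * f t := by
  have ht0 : t < 0 := hts.trans_lt hs0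
  have hslope : slope f 0 s ≤ slope f 0 t :=
    hf.slope_anti h0 ⟨ht, ht0.ne⟩ ⟨hs, hs0.ne⟩ hts
  simp only [slope_def_field, hf0, sub_zero] at hslope
  have hs' : s ≠ 0 := hs0.ne
  have ht' : t ≠ 0 := ht0.ne
  calc t * f s = f s / s * (s * t) := by field_simp
    _ ≤ f t / t * (s * t) := by gcongr; exact (mul_pos_of_neg_of_neg hs0 ht0).le
    _ = s * f t := by field_simp

/-- Chords to the right of `x` are no steeper than `f'(u)` at any differentiability point
`u < x`, and such points exist arbitrarily close to `x`. -/
lemma eventually_slope_lt {g : ℝ → ℝ} {x r : ℝ} (hf : ConcaveOn ℝ S f) (hS : IsOpen S)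
    (hx : x ∈ S) (hdiff : ∀ᵐ u, u ∈ S → DifferentiableAt ℝ f u)
    (hderiv : ∀ u ∈ S, DifferentiableAt ℝ f u → deriv f u ≤ g u)
    (hg : ContinuousAt g x) (hr : g x < r) :
    ∀ᶠ z in 𝓝[>] x, slope f x z < r := by
  have hnear : ∀ᶠ u in 𝓝[<] x, u ∈ S ∧ g u < r :=
    nhdsWithin_le_nhds ((hS.eventually_mem hx).and (hg.eventually_lt_const hr))
  obtain ⟨l, hlx, hl⟩ := mem_nhdsLT_iff_exists_Ioo_subset.mp hnear
  obtain ⟨u, hu_diff, hlu, hux⟩ := (Measure.dense_of_ae hdiff).exists_between hlx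
  obtain ⟨huS, hgu⟩ := hl ⟨hlu, hux⟩
  filter_upwards [self_mem_nhdsWithin, nhdsWithin_le_nhds (hS.eventually_mem hx)]
    with z hxz hzS
  calc slope f x z ≤ slope f u x := by
        simpa only [slope_def_field] using hf.slope_anti_adjacent huS hzS hux hxz
    _ ≤ deriv f u := hf.slope_le_deriv huS hx hux (hu_diff huS)
    _ ≤ g u := hderiv u huS (hu_diff huS)
    _ < r := hgu

end ConcaveOn

lemma hasDerivAt_neg_rpow_neg {p x : ℝ} (hx : x < 0) :
    HasDerivAt (fun y : ℝ => -((-y) ^ p)) (p * (-x) ^ (p - 1)) x :=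
  ((hasDerivAt_neg x).rpow_const (Or.inl (neg_pos.mpr hx).ne')).fun_neg.congr_deriv (by ring)

namespace WMPlus

variable {M : ℝ} {χ : ℝ → ℝ}

lemma le_of_le_neg_one (hχ : WMPlus M χ) (hnorm : χ (-1) = -1) {t : ℝ} (ht : t ≤ -1) :
    χ t ≤ t := by
  obtain ⟨hconc, -, -, hχ0, -, -⟩ := hχ
  have h := hconc.mul_le_mul_of_map_zero (mem_Iic.mpr le_rfl) hχ0
    (mem_Iic.mpr (ht.trans (by norm_num))) (mem_Iic.mpr (by norm_num)) ht (by norm_num)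
  rw [hnorm] at h
  linarith

lemma le_mul_div_of_hasDerivAt (hχ : WMPlus M χ) {u d : ℝ} (hu : u < 0)
    (hd : HasDerivAt χ d u) : d ≤ M * χ u / u := by
  obtain ⟨-, -, -, -, hneg, hgrowth⟩ := hχ
  have hbound := hgrowth u hu d hd
  rw [abs_of_neg (hneg u hu)] at hbound
  rw [le_div_iff_of_neg hu]
  linarith [neg_le_abs (u * d)]

lemma concaveOn_Iio (hχ : WMPlus M χ) : ConcaveOn ℝ (Iio 0) χ :=
  hχ.1.subset Iio_subset_Iic_self (convex_Iio 0)

lemma continuousOn_Iio (hχ : WMPlus M χ) : ContinuousOn χ (Iio 0) :=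
  hχ.concaveOn_Iio.continuousOn isOpen_Iio

lemma ae_differentiableAt (hχ : WMPlus M χ) : ∀ᵐ u, u ∈ Iio 0 → DifferentiableAt ℝ χ u := by
  filter_upwards [hχ.2.1.monotoneOn.ae_differentiableWithinAt_of_mem] with u hu hu0
  exact (hu (mem_Iic.mpr hu0.le)).differentiableAt (Iic_mem_nhds hu0)

lemma frequently_slope_lt (hχ : WMPlus M χ) {x r : ℝ} (hx : x < 0) (hr : M * χ x / x < r) :
    ∃ᶠ z in 𝓝[>] x, slope χ x z < r := by
  have hcont : ContinuousAt (fun u => M * χ u / u) x :=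
    (continuousAt_const.mul (hχ.continuousOn_Iio.continuousAt (Iio_mem_nhds hx))).div
      continuousAt_id hx.ne
  exact (hχ.concaveOn_Iio.eventually_slope_lt isOpen_Iio hx hχ.ae_differentiableAt
    (fun u hu hdiff => hχ.le_mul_div_of_hasDerivAt hu hdiff.hasDerivAt) hcont hr).frequently

lemma le_neg_rpow_of_lt (hχ : WMPlus M χ) (hnorm : χ (-1) = -1) {p : ℝ} (hp : M < p) {t : ℝ}
    (ht : -1 ≤ t) (ht0 : t < 0) : χ t ≤ -((-t) ^ p) := by
  have hIcc : Icc (-1) t ⊆ Iio 0 := fun x hx => hx.2.trans_lt ht0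
  have hIco : Ico (-1) t ⊆ Iio 0 := Ico_subset_Icc_self.trans hIcc
  have hbound : ∀ x ∈ Ico (-1) t, χ x = -((-x) ^ p) → M * χ x / x < p * (-x) ^ (p - 1) := by
    intro x hx hx_eq
    have hnx : 0 < -x := neg_pos.mpr (hIco hx)
    have hquot : M * χ x / x = M * (-x) ^ (p - 1) := by
      rw [hx_eq, Real.rpow_sub_one hnx.ne', mul_div_assoc, ← neg_div_neg_eq, neg_neg]
    rw [hquot]
    exact mul_lt_mul_of_pos_right hp (Real.rpow_pos_of_pos hnx _)
  refine image_le_of_liminf_slope_right_lt_deriv_boundary' (hχ.continuousOn_Iio.mono hIcc)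
    (fun x hx _ hr => hχ.frequently_slope_lt (hIco hx) hr) ?_
    (fun x hx => (hasDerivAt_neg_rpow_neg (hIcc hx)).continuousAt.continuousWithinAt)
    (fun x hx => (hasDerivAt_neg_rpow_neg (hIco hx)).hasDerivWithinAt) hbound ⟨ht, le_rfl⟩
  rw [hnorm, neg_neg, Real.one_rpow]

lemma le_neg_rpow (hχ : WMPlus M χ) (hnorm : χ (-1) = -1) {t : ℝ} (ht : -1 ≤ t) (ht0 : t < 0) :
    χ t ≤ -((-t) ^ M) := by
  have hlim : Tendsto (fun p : ℝ => -((-t) ^ p)) (𝓝[>] M) (𝓝 (-((-t) ^ M))) :=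
    (Real.continuousAt_const_rpow (neg_pos.mpr ht0).ne').neg.continuousWithinAt.tendsto
  exact ge_of_tendsto hlim
    (eventually_nhdsWithin_of_forall fun p hp => hχ.le_neg_rpow_of_lt hnorm hp ht ht0)

end WMPlus

theorem stmt10 (M : ℝ) (hM : 1 ≤ M) (χt : ℝ → ℝ) (hχt : WMPlus M χt)
    (hnorm : χt (-1) = -1) :
    (∀ t : ℝ, -1 ≤ t → t ≤ 0 → χt t ≤ -((-t) ^ M)) ∧
    (∀ t : ℝ, t ≤ -1 → χt t ≤ t) := by
  refine ⟨fun t ht ht0 => ?_, fun t ht => hχt.le_of_le_neg_one hnorm ht⟩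
  rcases ht0.lt_or_eq with ht0 | rfl
  · exact hχt.le_neg_rpow hnorm ht ht0
  · rw [hχt.2.2.2.1, neg_zero, Real.zero_rpow (by linarith), neg_zero]
end
end

section
/- Let χ̃ ∈ W̃⁻ with χ̃(−1) = −1, and let χ(t) := max{t, −1} for t ≤ 0. Then for every 0 < ε ≤ 1 one has sup_{t ≤ −1} χ(εt)/χ̃(t) = 1/(−χ̃(−ε⁻¹)); that is, Q₀(ε) = (−χ̃(−1/ε))⁻¹. -/
open MeasureTheory Filter Set

noncomputable section

theorem stmt11 (χt : ℝ → ℝ) (hχt : WtildeMinus χt) (hnorm : χt (-1) = -1) :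
    ∀ ε : ℝ, 0 < ε → ε ≤ 1 →
      Q0 (fun t => max t (-1)) χt ε = 1 / (-(χt (-ε⁻¹))) := by
  obtain ⟨hconv, hmono, hnonpos, h0, -⟩ := hχt
  intro ε hε hε1
  have hinv : ε * ε⁻¹ = 1 := mul_inv_cancel₀ hε.ne'
  have hεinv : (1:ℝ) ≤ ε⁻¹ := by nlinarith
  set s : ℝ := -ε⁻¹ with hs
  have hs1 : s ≤ -1 := by simp only [hs]; linarith
  have hs0 : s < 0 := by linarith
  have hεs : ε * s = -1 := by simp only [hs]; field_simp
  have hneg : ∀ t ≤ (-1:ℝ), χt t ≤ -1 := by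
    intro t ht
    have := hmono (mem_Iic.2 (by linarith : t ≤ (0:ℝ)))
      (mem_Iic.2 (by norm_num : (-1:ℝ) ≤ 0)) ht
    linarith [hnorm ▸ this]
  have hχs : χt s ≤ -1 := hneg s hs1
  have hχspos : (0:ℝ) < -χt s := by linarith
  -- Convexity: for s ≤ t ≤ 0, χt t ≤ (t/s) * χt s
  have key : ∀ t, s ≤ t → t ≤ 0 → χt t ≤ (t / s) * χt s := by
    intro t hst ht0
    have ha : 0 ≤ t / s := by rw [← neg_div_neg_eq]; exact div_nonneg (by linarith) (by linarith)
    have hb : 0 ≤ 1 - t / s := by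
      have : t / s ≤ 1 := by
        rw [div_le_one_iff]
        right; right; exact ⟨hs0, hst⟩
      linarith
    have hcx := hconv.2 (mem_Iic.2 hs0.le) (mem_Iic.2 (le_refl (0:ℝ))) ha hb (by ring)
    have hx : (t / s) • s + (1 - t / s) • (0:ℝ) = t := by
      simp only [smul_eq_mul, mul_zero, add_zero]
      exact div_mul_cancel₀ t hs0.ne
    rw [hx] at hcx
    simpa [smul_eq_mul, h0] using hcx
  set M : ℝ := 1 / (-χt s) with hM
  have hGreatest : IsGreatest ((fun t => max (ε * t) (-1) / χt t) '' Set.Iic (-1)) M := by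
    constructor
    · refine ⟨s, mem_Iic.2 hs1, ?_⟩
      simp only [hεs, max_self]
      rw [hM]
      rw [div_neg, neg_div]
    · rintro x ⟨t, ht, rfl⟩
      rw [mem_Iic] at ht
      have hχt1 : χt t ≤ -1 := hneg t ht
      have hχtpos : (0:ℝ) < -χt t := by linarith
      by_cases hc : s ≤ t
      · have hεt : -1 ≤ ε * t := by nlinarith
        simp only [max_eq_left hεt]
        have hkey := key t hc (by linarith)
        have hts : t / s = -(ε * t) := by
          simp only [hs]; field_simp
        rw [hts] at hkey
        rw [hM, show ε * t / χt t = (-(ε * t)) / (-χt t) from (neg_div_neg_eq _ _).symm,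
          div_le_div_iff₀ hχtpos hχspos]
        nlinarith
      · push_neg at hc
        have hεt : ε * t ≤ -1 := by nlinarith
        simp only [max_eq_right hεt]
        have hm : χt t ≤ χt s := hmono (mem_Iic.2 (by linarith)) (mem_Iic.2 hs0.le) hc.le
        rw [show (-1:ℝ) / χt t = 1 / (-χt t) by rw [div_neg, neg_div], hM]
        exact one_div_le_one_div_of_le hχspos (by linarith)
  have := hGreatest.csSup_eq
  simpa [Q0, hM] using this
end
end

section
/- Let (Ω, 𝒜, ν) be a finite measure space and let f: Ω → [0,∞) be measurable. Let χ, χ̃: (−∞,0] → (−∞,0] be non-decreasing functions with χ̃ ≤ χ on (−∞,0] and χ̃(−1) < 0. Then for every 0 < ε ≤ 1, as an inequality in [0,∞], ∫_Ω (−χ(−ε·f)) dν ≤ Q₀(ε) · [ (−χ̃(−1)) · ν(Ω) + ∫_Ω (−χ̃(−f)) dν ]. -/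
open MeasureTheory Filter Set

noncomputable section

theorem stmt12 {Ω : Type*} [MeasurableSpace Ω] (ν : Measure Ω) [IsFiniteMeasure ν]
    (f : Ω → ℝ) (hf_meas : Measurable f) (hf_nonneg : ∀ x, 0 ≤ f x)
    (χ χt : ℝ → ℝ)
    (hχ_mono : MonotoneOn χ (Set.Iic 0))
    (hχt_mono : MonotoneOn χt (Set.Iic 0))
    (hχ_nonpos : ∀ t ≤ (0:ℝ), χ t ≤ 0)
    (hχt_nonpos : ∀ t ≤ (0:ℝ), χt t ≤ 0)
    (hle : ∀ t ≤ (0:ℝ), χt t ≤ χ t)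
    (hχt1 : χt (-1) < 0) :
    ∀ ε : ℝ, 0 < ε → ε ≤ 1 →
      ∫⁻ x, ENNReal.ofReal (-(χ (-(ε * f x)))) ∂ν
        ≤ ENNReal.ofReal (Q0 χ χt ε) *
            (ENNReal.ofReal (-(χt (-1))) * ν Set.univ
              + ∫⁻ x, ENNReal.ofReal (-(χt (-(f x)))) ∂ν) := by
  intro ε hε hε1
  have hχt_neg : ∀ t ≤ (-1:ℝ), χt t < 0 := fun t ht =>
    lt_of_le_of_lt (hχt_mono (ht.trans (by norm_num)) (by norm_num) ht) hχt1
  have hbdd : BddAbove ((fun t => χ (ε * t) / χt t) '' Set.Iic (-1)) := by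
    refine ⟨1, ?_⟩
    rintro y ⟨t, ht, rfl⟩
    have ht' : t ≤ -1 := ht
    have h1 : χt t < 0 := hχt_neg t ht'
    have ht0 : t ≤ 0 := ht'.trans (by norm_num)
    have hεt : ε * t ≤ 0 := mul_nonpos_of_nonneg_of_nonpos hε.le ht0
    have h2 : χt t ≤ χ (ε * t) := by
      have htεt : t ≤ ε * t := by nlinarith
      exact (hle t ht0).trans (hχ_mono ht0 hεt htεt)
    rw [div_le_one_iff]
    exact Or.inr (Or.inr ⟨h1, h2⟩)
  have hmem : ∀ t ≤ (-1:ℝ), χ (ε * t) / χt t ≤ Q0 χ χt ε := fun t ht =>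
    le_csSup hbdd ⟨t, ht, rfl⟩
  have hQ0 : 0 ≤ Q0 χ χt ε := by
    refine le_trans ?_ (hmem (-1) le_rfl)
    rw [← neg_div_neg_eq]
    have := hχ_nonpos (ε * (-1)) (by nlinarith)
    exact div_nonneg (by linarith) (by linarith)
  set Q := Q0 χ χt ε with hQdef
  have hA : 0 ≤ -(χt (-1)) := by linarith
  have key : ∀ x, -(χ (-(ε * f x))) ≤ Q * (-(χt (-1)) + -(χt (-(f x)))) := by
    intro x
    have hs0 : 0 ≤ f x := hf_nonneg x
    set s := f x with hs
    have hg : 0 ≤ -(χt (-s)) := by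
      have := hχt_nonpos (-s) (by linarith); linarith
    by_cases hcase : s ≤ 1
    · have h1 : χ (ε * (-1)) ≤ χ (-(ε * s)) :=
        hχ_mono (show ε * (-1) ∈ Set.Iic 0 from Set.mem_Iic.mpr (by nlinarith))
          (show -(ε * s) ∈ Set.Iic 0 from Set.mem_Iic.mpr (by nlinarith))
          (by nlinarith)
      have h2 : χ (ε * (-1)) / χt (-1) ≤ Q := hmem (-1) le_rfl
      have h3 : χ (ε * (-1)) / χt (-1) * (-(χt (-1))) ≤ Q * (-(χt (-1))) :=
        mul_le_mul_of_nonneg_right h2 hA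
      have heq : χ (ε * (-1)) / χt (-1) * (-(χt (-1))) = -(χ (ε * (-1))) := by
        field_simp [hχt1.ne]
      rw [heq] at h3
      nlinarith
    · have hs1 : 1 < s := not_le.mp hcase
      have hχts : χt (-s) < 0 := hχt_neg (-s) (by linarith)
      have h2 : χ (ε * (-s)) / χt (-s) ≤ Q := hmem (-s) (by linarith)
      have h3 : χ (ε * (-s)) / χt (-s) * (-(χt (-s))) ≤ Q * (-(χt (-s))) :=
        mul_le_mul_of_nonneg_right h2 hg
      have heq : χ (ε * (-s)) / χt (-s) * (-(χt (-s))) = -(χ (ε * (-s))) := by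
        field_simp [hχts.ne]
      rw [heq] at h3
      have hre : ε * (-s) = -(ε * s) := by ring
      rw [hre] at h3
      nlinarith
  calc ∫⁻ x, ENNReal.ofReal (-(χ (-(ε * f x)))) ∂ν
      ≤ ∫⁻ x, ENNReal.ofReal (Q * (-(χt (-1)) + -(χt (-(f x))))) ∂ν :=
        lintegral_mono fun x => ENNReal.ofReal_le_ofReal (key x)
    _ = ∫⁻ x, ENNReal.ofReal Q *
          (ENNReal.ofReal (-(χt (-1))) + ENNReal.ofReal (-(χt (-(f x))))) ∂ν := by
        congr 1; funext x
        rw [ENNReal.ofReal_mul hQ0, ENNReal.ofReal_add hA]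
        have := hχt_nonpos (-(f x)) (by linarith [hf_nonneg x]); linarith
    _ = ENNReal.ofReal Q *
          ∫⁻ x, (ENNReal.ofReal (-(χt (-1))) + ENNReal.ofReal (-(χt (-(f x))))) ∂ν :=
        lintegral_const_mul' _ _ ENNReal.ofReal_ne_top
    _ = ENNReal.ofReal Q *
          (ENNReal.ofReal (-(χt (-1))) * ν Set.univ
            + ∫⁻ x, ENNReal.ofReal (-(χt (-(f x)))) ∂ν) := by
        rw [lintegral_add_left measurable_const, lintegral_const]
end
end
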